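/- For j ∈ I define integer vectors u_j, v_j : {1, …, m} → ℤ by u_j(ℓ) = [ℓ = j]·[j > 0] + [ℓ = j⁺]·[j⁺ ≤ m] + C_{|i_ℓ|,|i_j|}·[j < ℓ < j⁺]·[ℓ > 0] and v_j(ℓ) = −ε_j·[ℓ = j]·[j > 0] + ε_{j⁺}·[ℓ = j⁺]·[j⁺ ≤ m] (these are the exponents of P_ℓ and Q_ℓ in the pullback of the coordinate X_j along the Poisson parametrization by Borel subgroups of SL_2). Then for all j, k ∈ I: ∑_{ℓ=1}^{m} d_{|i_ℓ|}·(u_j(ℓ)·v_k(ℓ) − v_j(ℓ)·u_k(ℓ)) = 2·d_{|i_k|}·b_{jk}. (This is the computation showing that the standard Poisson bracket of the X-coordinates is log-canonical with coefficients given by the exchange matrix: {X_j, X_k} = b_{jk}·d_{|i_k|}·X_j·X_k.) -/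
import Mathlib

open Classical in
/-- Indicator of a proposition: 1 if true, 0 if false. -/
noncomputable def ind {R : Type*} [Zero R] [One R] (P : Prop) : R :=
  if P then 1 else 0

lemma ind_true {R : Type*} [Zero R] [One R] {P : Prop} (h : P) : (ind P : R) = 1 := by
  simp [ind, h]

lemma ind_false {R : Type*} [Zero R] [One R] {P : Prop} (h : ¬P) : (ind P : R) = 0 := by
  simp [ind, h]

theorem poisson_bracket_log_canonical
    (r rt m : ℤ) (hr : 1 ≤ r) (hrrt : r ≤ rt) (hm : 1 ≤ m)
    (i : ℤ → ℤ)
    (hiword : ∀ k, 1 ≤ k → k ≤ m → 1 ≤ |i k| ∧ |i k| ≤ r)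
    (hineg : ∀ k, -rt ≤ k → k ≤ -1 → i k = k)
    (Idx : ℤ → Prop)
    (hIdx : ∀ k, Idx k ↔ ((-rt ≤ k ∧ k ≤ -1) ∨ (1 ≤ k ∧ k ≤ m)))
    (ε : ℤ → ℚ)
    (hε : ∀ k, Idx k → ε k = if 0 < i k then 1 else -1)
    (hεm : ε (m + 1) = 1)
    (kp : ℤ → ℤ)
    (hkp1 : ∀ k, Idx k → k < kp k)
    (hkp2 : ∀ k, Idx k → kp k ≤ m + 1)
    (hkp3 : ∀ k, Idx k → kp k ≤ m → Idx (kp k) ∧ |i (kp k)| = |i k|)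
    (hkp4 : ∀ k, Idx k → ∀ l, Idx l → k < l → l < kp k → |i l| ≠ |i k|)
    (C : ℤ → ℤ → ℚ)
    (hCdiag : ∀ j, 1 ≤ j → j ≤ rt → C j j = 2)
    (d : ℤ → ℚ)
    (hdpos : ∀ j, 1 ≤ j → j ≤ rt → 0 < d j)
    (hdsym : ∀ j k, 1 ≤ j → j ≤ rt → 1 ≤ k → k ≤ rt →
      d j * C j k = d k * C k j)
    (b : ℤ → ℤ → ℚ)
    (hb : ∀ j k, Idx j → Idx k → b j k =
      C (|i k|) (|i j|) / 2 *
        (ε j * ind (j = kp k) - ε k * ind (kp j = k)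
          + ε j * ind (k < j) * ind (j < kp k) * ind (0 < j)
          - ε (kp j) * ind (k < kp j) * ind (kp j < kp k) * ind (kp j ≤ m)
          - ε k * ind (j < k) * ind (k < kp j) * ind (0 < k)
          + ε (kp k) * ind (j < kp k) * ind (kp k < kp j) * ind (kp k ≤ m)))
    -- the exponent vectors u_j, v_j
    (u : ℤ → ℤ → ℚ)
    (hu : ∀ j l, Idx j → u j l =
      ind (l = j) * ind (0 < j) + ind (l = kp j) * ind (kp j ≤ m)
        + C (|i l|) (|i j|) * ind (j < l) * ind (l < kp j) * ind (0 < l))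
    (v : ℤ → ℤ → ℚ)
    (hv : ∀ j l, Idx j → v j l =
      -(ε j) * ind (l = j) * ind (0 < j)
        + ε (kp j) * ind (l = kp j) * ind (kp j ≤ m)) :
    ∀ j k, Idx j → Idx k →
      ∑ l ∈ Finset.Icc (1 : ℤ) m,
          d (|i l|) * (u j l * v k l - v j l * u k l)
        = 2 * d (|i k|) * b j k := by
  have hIdx' : ∀ a, Idx a → (-rt ≤ a ∧ a ≤ -1) ∨ (1 ≤ a ∧ a ≤ m) := fun a ha => (hIdx a).1 ha
  have habs : ∀ a, Idx a → 1 ≤ |i a| ∧ |i a| ≤ rt := by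
    intro a ha
    rcases hIdx' a ha with ⟨h1, h2⟩ | ⟨h1, h2⟩
    · rw [hineg a h1 h2, abs_of_nonpos (by omega)]; omega
    · exact ⟨(hiword a h1 h2).1, le_trans (hiword a h1 h2).2 hrrt⟩
  have hkpm : ∀ a, Idx a → kp a ≤ m → 1 ≤ kp a ∧ kp a ≤ m ∧ |i (kp a)| = |i a| := by
    intro a ha hle
    obtain ⟨hidx2, habs2⟩ := hkp3 a ha hle
    refine ⟨?_, hle, habs2⟩
    by_contra hcon
    push_neg at hcon
    rcases hIdx' (kp a) hidx2 with ⟨h1, h2⟩ | ⟨h1, h2⟩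
    · have hia : i (kp a) = kp a := hineg _ h1 h2
      have h3 := hkp1 a ha
      rcases hIdx' a ha with ⟨g1, g2⟩ | ⟨g1, g2⟩
      · rw [hineg a g1 g2, hia, abs_of_nonpos (by omega), abs_of_nonpos (by omega)] at habs2
        omega
      · omega
    · omega
  intro j k hj hk
  -- abbreviations for the facts we need about j and k
  have habsj := habs j hj
  have habsk := habs k hk
  have hds : d (|i j|) * C (|i j|) (|i k|) = d (|i k|) * C (|i k|) (|i j|) :=
    hdsym _ _ habsj.1 habsj.2 habsk.1 habsk.2
  -- collapsing lemma for sums against the indicator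
  have sum_ind : ∀ (a : ℤ) (f : ℤ → ℚ),
      ∑ l ∈ Finset.Icc (1 : ℤ) m, f l * ind (l = a) = ind (1 ≤ a ∧ a ≤ m) * f a := by
    intro a f
    by_cases ha : 1 ≤ a ∧ a ≤ m
    · rw [Finset.sum_eq_single_of_mem a (Finset.mem_Icc.2 ha)]
      · rw [ind_true rfl, ind_true ha]; ring
      · intro c hc hca
        rw [ind_false hca]; ring
    · rw [Finset.sum_eq_zero, ind_false ha, zero_mul]
      intro l hl
      rw [Finset.mem_Icc] at hl
      have : l ≠ a := by omega
      rw [ind_false this]; ring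
  -- Step 1: collapse the sum
  have hred : ∑ l ∈ Finset.Icc (1 : ℤ) m, d (|i l|) * (u j l * v k l - v j l * u k l)
      = d (|i k|) * (-(ε k) * ind (0 < k) * u j k + ε (kp k) * ind (kp k ≤ m) * u j (kp k))
        - d (|i j|) * (-(ε j) * ind (0 < j) * u k j + ε (kp j) * ind (kp j ≤ m) * u k (kp j)) := by
    have step : ∑ l ∈ Finset.Icc (1 : ℤ) m, d (|i l|) * (u j l * v k l - v j l * u k l)
        = (∑ l ∈ Finset.Icc (1 : ℤ) m,
            (fun x => d (|i x|) * u j x * (-(ε k) * ind (0 < k))) l * ind (l = k))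
          + (∑ l ∈ Finset.Icc (1 : ℤ) m,
            (fun x => d (|i x|) * u j x * (ε (kp k) * ind (kp k ≤ m))) l * ind (l = kp k))
          + (∑ l ∈ Finset.Icc (1 : ℤ) m,
            (fun x => d (|i x|) * u k x * (ε j * ind (0 < j))) l * ind (l = j))
          + (∑ l ∈ Finset.Icc (1 : ℤ) m,
            (fun x => d (|i x|) * u k x * (-(ε (kp j)) * ind (kp j ≤ m))) l * ind (l = kp j)) := by
      rw [← Finset.sum_add_distrib, ← Finset.sum_add_distrib, ← Finset.sum_add_distrib]
      refine Finset.sum_congr rfl fun l _ => ?_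
      rw [hv k l hk, hv j l hj]
      ring
    rw [step, sum_ind, sum_ind, sum_ind, sum_ind]
    have hA : ind (1 ≤ k ∧ k ≤ m) * (d (|i k|) * u j k * (-(ε k) * ind (0 < k)))
        = d (|i k|) * u j k * (-(ε k) * ind (0 < k)) := by
      by_cases h : 0 < k
      · have hmem : 1 ≤ k ∧ k ≤ m := by rcases hIdx' k hk with h' | h' <;> omega
        rw [ind_true hmem, one_mul]
      · rw [ind_false h]; ring
    have hB : ind (1 ≤ kp k ∧ kp k ≤ m) * (d (|i (kp k)|) * u j (kp k) * (ε (kp k) * ind (kp k ≤ m)))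
        = d (|i k|) * u j (kp k) * (ε (kp k) * ind (kp k ≤ m)) := by
      by_cases h : kp k ≤ m
      · obtain ⟨h1, h2, h3⟩ := hkpm k hk h
        rw [ind_true ⟨h1, h2⟩, h3, one_mul]
      · rw [ind_false h]
        rw [ind_false (by omega : ¬(1 ≤ kp k ∧ kp k ≤ m))]
        ring
    have hC : ind (1 ≤ j ∧ j ≤ m) * (d (|i j|) * u k j * (ε j * ind (0 < j)))
        = d (|i j|) * u k j * (ε j * ind (0 < j)) := by
      by_cases h : 0 < j
      · have hmem : 1 ≤ j ∧ j ≤ m := by rcases hIdx' j hj with h' | h' <;> omega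
        rw [ind_true hmem, one_mul]
      · rw [ind_false h]; ring
    have hD : ind (1 ≤ kp j ∧ kp j ≤ m) * (d (|i (kp j)|) * u k (kp j) * (-(ε (kp j)) * ind (kp j ≤ m)))
        = d (|i j|) * u k (kp j) * (-(ε (kp j)) * ind (kp j ≤ m)) := by
      by_cases h : kp j ≤ m
      · obtain ⟨h1, h2, h3⟩ := hkpm j hj h
        rw [ind_true ⟨h1, h2⟩, h3, one_mul]
      · rw [ind_false h]
        rw [ind_false (by omega : ¬(1 ≤ kp j ∧ kp j ≤ m))]
        ring
    rw [hA, hB, hC, hD]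
    ring
  rw [hred, hu j k hj, hu j (kp k) hj, hu k j hk, hu k (kp j) hk, hb j k hj hk]
  -- the six groups of terms
  have hE1 : d (|i k|) * (-(ε k)) * ind (0 < k) * ind (k = j) * ind (0 < j)
      + d (|i j|) * ε j * ind (0 < j) * ind (j = k) * ind (0 < k) = 0 := by
    by_cases h : j = k
    · subst h; ring
    · rw [ind_false h, ind_false (Ne.symm h)]; ring
  have hE2 : d (|i k|) * ε (kp k) * ind (kp k ≤ m) * ind (kp k = j) * ind (0 < j)
      + d (|i j|) * ε j * ind (0 < j) * ind (j = kp k) * ind (kp k ≤ m)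
      = d (|i k|) * C (|i k|) (|i j|) * ε j * ind (j = kp k) := by
    by_cases h : j = kp k
    · have hle : kp k ≤ m := by
        have := hkp2 k hk
        rcases hIdx' j hj with h' | h' <;> omega
      obtain ⟨h1, h2, h3⟩ := hkpm k hk hle
      have habsjk : |i j| = |i k| := by rw [h, h3]
      have hC2 : C (|i k|) (|i j|) = 2 := by rw [habsjk]; exact hCdiag _ habsk.1 habsk.2
      have h0j : 0 < j := by omega
      rw [ind_true hle, ind_true h.symm, ind_true h0j, ind_true h, hC2, habsjk, ← h]
      ring
    · rw [ind_false h, ind_false (Ne.symm h)]; ring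
  have hE3 : d (|i k|) * (-(ε k)) * ind (0 < k) * ind (k = kp j) * ind (kp j ≤ m)
      - d (|i j|) * ε (kp j) * ind (kp j ≤ m) * ind (kp j = k) * ind (0 < k)
      = d (|i k|) * C (|i k|) (|i j|) * (-(ε k)) * ind (kp j = k) := by
    by_cases h : kp j = k
    · have hle : kp j ≤ m := by rcases hIdx' k hk with h' | h' <;> omega
      obtain ⟨h1, h2, h3⟩ := hkpm j hj hle
      have habskj : |i k| = |i j| := by rw [← h, h3]
      have hC2 : C (|i k|) (|i j|) = 2 := by rw [habskj]; exact hCdiag _ habsj.1 habsj.2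
      have h0k : 0 < k := by omega
      rw [ind_true hle, ind_true h.symm, ind_true h0k, ind_true h, hC2]
      have hdd : d (|i j|) = d (|i k|) := by rw [habskj]
      rw [hdd, h]
      ring
    · rw [ind_false h, ind_false (Ne.symm h)]; ring
  have hE4 : d (|i k|) * ε (kp k) * ind (kp k ≤ m) * ind (kp k = kp j) * ind (kp j ≤ m)
      - d (|i j|) * ε (kp j) * ind (kp j ≤ m) * ind (kp j = kp k) * ind (kp k ≤ m) = 0 := by
    by_cases h : kp j = kp k
    · by_cases h2 : kp j ≤ m
      · obtain ⟨j1, j2, j3⟩ := hkpm j hj h2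
        obtain ⟨k1, k2, k3⟩ := hkpm k hk (h ▸ h2)
        have hdd : d (|i j|) = d (|i k|) := by rw [← j3, h, k3]
        rw [hdd, ind_true h, ind_true h.symm, h]
        ring
      · rw [ind_false h2]; ring
    · rw [ind_false h, ind_false (Ne.symm h)]; ring
  have hE5 : d (|i k|) * (-(ε k)) * ind (0 < k) * (C (|i k|) (|i j|) * ind (j < k) * ind (k < kp j) * ind (0 < k))
      + d (|i j|) * ε j * ind (0 < j) * (C (|i j|) (|i k|) * ind (k < j) * ind (j < kp k) * ind (0 < j))
      = d (|i k|) * C (|i k|) (|i j|) *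
          (ε j * ind (k < j) * ind (j < kp k) * ind (0 < j)
            - ε k * ind (j < k) * ind (k < kp j) * ind (0 < k)) := by
    have s1 : (ind (0 < k) : ℚ) * ind (0 < k) = ind (0 < k) := by
      by_cases h : 0 < k
      · rw [ind_true h]; ring
      · rw [ind_false h]; ring
    have s2 : (ind (0 < j) : ℚ) * ind (0 < j) = ind (0 < j) := by
      by_cases h : 0 < j
      · rw [ind_true h]; ring
      · rw [ind_false h]; ring
    linear_combination (-(ε k) * d (|i k|) * C (|i k|) (|i j|) * ind (j < k) * ind (k < kp j)) * s1
      + (ε j * d (|i j|) * C (|i j|) (|i k|) * ind (k < j) * ind (j < kp k)) * s2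
      + (ε j * ind (k < j) * ind (j < kp k) * ind (0 < j)) * hds
  have hE6 : d (|i k|) * ε (kp k) * ind (kp k ≤ m) * (C (|i (kp k)|) (|i j|) * ind (j < kp k) * ind (kp k < kp j) * ind (0 < kp k))
      - d (|i j|) * ε (kp j) * ind (kp j ≤ m) * (C (|i (kp j)|) (|i k|) * ind (k < kp j) * ind (kp j < kp k) * ind (0 < kp j))
      = d (|i k|) * C (|i k|) (|i j|) *
          (ε (kp k) * ind (j < kp k) * ind (kp k < kp j) * ind (kp k ≤ m)
            - ε (kp j) * ind (k < kp j) * ind (kp j < kp k) * ind (kp j ≤ m)) := by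
    have T1 : d (|i k|) * ε (kp k) * ind (kp k ≤ m) * (C (|i (kp k)|) (|i j|) * ind (j < kp k) * ind (kp k < kp j) * ind (0 < kp k))
        = d (|i k|) * C (|i k|) (|i j|) * (ε (kp k) * ind (j < kp k) * ind (kp k < kp j) * ind (kp k ≤ m)) := by
      by_cases h : kp k ≤ m
      · obtain ⟨h1, h2, h3⟩ := hkpm k hk h
        rw [h3, ind_true (by omega : (0:ℤ) < kp k)]
        ring
      · rw [ind_false h]; ring
    have T2 : d (|i j|) * ε (kp j) * ind (kp j ≤ m) * (C (|i (kp j)|) (|i k|) * ind (k < kp j) * ind (kp j < kp k) * ind (0 < kp j))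
        = d (|i k|) * C (|i k|) (|i j|) * (ε (kp j) * ind (k < kp j) * ind (kp j < kp k) * ind (kp j ≤ m)) := by
      by_cases h : kp j ≤ m
      · obtain ⟨h1, h2, h3⟩ := hkpm j hj h
        rw [h3, ind_true (by omega : (0:ℤ) < kp j)]
        linear_combination (ε (kp j) * ind (kp j ≤ m) * ind (k < kp j) * ind (kp j < kp k)) * hds
      · rw [ind_false h]; ring
    rw [T1, T2]; ring
  linear_combination hE1 + hE2 + hE3 + hE4 + hE5 + hE6
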